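/- arXiv:1506.04292 — 5 statements merged into one kernel-verified Lean document; each statement's English description precedes it below -/
import Mathlib

section
/- Let V be an oriented 4-dimensional real inner product space, J₊ an orthogonal complex structure inducing the chosen orientation. Then for any 1-form β and vector X, the self-dual part of β∧X♭ equals ½ β∧X♭ - ½ (J₊β)∧(J₊X)♭ - ½ β(J₊X)·ω₊, where ω₊ is the fundamental 2-form of J₊. -/
/-!
Skew-symmetry and self-duality force the matrix of `ω₊` in the standard basis to be
`selfDualForm p q r`, the matrix of `p I + q J + r K` for the standard self-dual quaternionic
triple, and `J₊² = -1` gives `p² + q² + r² = ‖J₊ e₀‖² = 1`. For such matrices,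
`(Jβ) ∧ (JX)♭ + β(JX) ω = -(p² + q² + r²) ⋆(β ∧ X♭)` is a polynomial identity in `p, q, r` and
the coordinates of `β` and `X`; with `p² + q² + r² = 1` it is the claim.
-/

open scoped RealInnerProductSpace BigOperators

noncomputable section

abbrev V4 := EuclideanSpace ℝ (Fin 4)

def e4 (i : Fin 4) : V4 := EuclideanSpace.single i (1:ℝ)

/-- Levi-Civita symbol on four indices, as a determinant. -/
def eps4 (i j k l : Fin 4) : ℝ :=
  Matrix.det (Matrix.of fun r c : Fin 4 => if ![i, j, k, l] r = c then (1:ℝ) else 0)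

/-- Components of the fundamental 2-form ω(X,Y) = ⟨JX, Y⟩ of an endomorphism `J`. -/
def om (J : V4 →ₗ[ℝ] V4) (i j : Fin 4) : ℝ := ⟪J (e4 i), e4 j⟫

/-- A 2-form given by components `w` is self-dual: w = *w. -/
def SelfDual (w : Fin 4 → Fin 4 → ℝ) : Prop :=
  ∀ i j, w i j = (1/2) * ∑ k : Fin 4, ∑ l : Fin 4, w k l * eps4 k l i j

/-- A 2-form given by components `w` is anti-self-dual: w = -*w. -/
def AntiSelfDual (w : Fin 4 → Fin 4 → ℝ) : Prop :=
  ∀ i j, w i j = -((1/2) * ∑ k : Fin 4, ∑ l : Fin 4, w k l * eps4 k l i j)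


/-- Components of the 2-form β ∧ X♭. -/
def wedgeC (β : V4 →ₗ[ℝ] ℝ) (X : V4) (i j : Fin 4) : ℝ :=
  β (e4 i) * ⟪X, e4 j⟫ - β (e4 j) * ⟪X, e4 i⟫

open Matrix

/- With `P` the 0/1 matrix defining `eps4` and `V` the Vandermonde matrix,
`P * V(0,1,2,3) = V(i,j,k,l)` and `det V(0,1,2,3) = 12`. -/
lemma eps4_eq_vandermonde (i j k l : Fin 4) :
    eps4 i j k l = ((j : ℝ) - i) * (k - i) * (l - i) * (k - j) * (l - j) * (l - k) / 12 := by
  set v : Fin 4 → Fin 4 := ![i, j, k, l]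
  have hmul : (of fun r c : Fin 4 => if v r = c then (1:ℝ) else 0) *
      vandermonde (fun c : Fin 4 => (c : ℝ)) = vandermonde (fun r => (v r : ℝ)) := by
    ext r d
    simp [mul_apply, vandermonde_apply]
  have h12 : det (vandermonde (fun c : Fin 4 => (c : ℝ))) = 12 := by
    norm_num [det_vandermonde, Fin.prod_univ_succ]
  have := congrArg det hmul
  rw [det_mul, h12, det_vandermonde] at this
  rw [eps4, eq_div_iff (by norm_num), this]
  simp only [Fin.prod_univ_succ, Fin.prod_Ioi_succ, Fin.Ioi_zero_eq_map, Finset.prod_map,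
    Fin.coe_succEmb, Finset.univ_unique, Fin.default_eq_zero, Finset.map_singleton,
    Finset.prod_singleton, Fin.card_Ioi, Fin.succ_zero_eq_one, Finset.prod_const,
    Finset.card_singleton, pow_one, cons_val_zero, cons_val_succ, cons_val_one, cons_val_fin_one,
    Fin.val_eq_zero, tsub_self, pow_zero, v]
  ring

def hodgeStar (w : Fin 4 → Fin 4 → ℝ) (i j : Fin 4) : ℝ :=
  (1/2) * ∑ k : Fin 4, ∑ l : Fin 4, w k l * eps4 k l i j

lemma hodgeStar_of_antisymm (w : Fin 4 → Fin 4 → ℝ) (hw : ∀ k l, w l k = -w k l) :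
    hodgeStar w = !![0, w 2 3, w 3 1, w 1 2;
                     w 3 2, 0, w 0 3, w 2 0;
                     w 1 3, w 3 0, 0, w 0 1;
                     w 2 1, w 0 2, w 1 0, 0] := by
  ext i j
  fin_cases i <;> fin_cases j <;> norm_num [hodgeStar, Fin.sum_univ_four, eps4_eq_vandermonde] <;>
    linarith [hw 0 1, hw 0 2, hw 0 3, hw 1 2, hw 1 3, hw 2 3]

def selfDualForm (p q r : ℝ) : Matrix (Fin 4) (Fin 4) ℝ :=
  !![0, p, q, r;
     -p, 0, r, -q;
     -q, -r, 0, p;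
     -r, q, -p, 0]

lemma eq_selfDualForm_of_selfDual (w : Fin 4 → Fin 4 → ℝ) (hw : ∀ k l, w l k = -w k l)
    (hsd : SelfDual w) : w = selfDualForm (w 0 1) (w 0 2) (w 0 3) := by
  have h (i j : Fin 4) : w i j = hodgeStar w i j := hsd i j
  rw [hodgeStar_of_antisymm w hw] at h
  have h01 : w 0 1 = w 2 3 := h 0 1
  have h02 : w 0 2 = w 3 1 := h 0 2
  have h03 : w 0 3 = w 1 2 := h 0 3
  ext i j
  fin_cases i <;> fin_cases j <;>
    simp only [selfDualForm, Fin.isValue, Fin.zero_eta, Fin.mk_one, Fin.reduceFinMk, of_apply,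
      cons_val', cons_val_zero, cons_val_one, cons_val, cons_val_fin_one] <;>
    linarith [hw 0 0, hw 1 1, hw 2 2, hw 3 3, hw 0 1, hw 0 2, hw 0 3, hw 1 2, hw 1 3, hw 2 3]

lemma selfDualForm_wedge_eq_neg_hodgeStar (p q r : ℝ) (b x : Fin 4 → ℝ) (i j : Fin 4) :
    (selfDualForm p q r *ᵥ b) i * (selfDualForm p q r *ᵥ x) j
      - (selfDualForm p q r *ᵥ b) j * (selfDualForm p q r *ᵥ x) i
      - (selfDualForm p q r *ᵥ x ⬝ᵥ b) * selfDualForm p q r i j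
      = -(p ^ 2 + q ^ 2 + r ^ 2) * hodgeStar (fun k l => b k * x l - b l * x k) i j := by
  rw [hodgeStar_of_antisymm _ fun k l => by ring]
  fin_cases i <;> fin_cases j <;>
    simp only [selfDualForm, mulVec, dotProduct, Fin.sum_univ_four, Fin.isValue, Fin.zero_eta,
      Fin.mk_one, Fin.reduceFinMk, of_apply, cons_val', cons_val_zero, cons_val_one, cons_val,
      cons_val_fin_one] <;>
    ring

lemma inner_map_map_of_skew {E : Type*} [NormedAddCommGroup E] [InnerProductSpace ℝ E]
    {J : E →ₗ[ℝ] E} (hskew : ∀ x y : E, ⟪J x, y⟫ = -⟪x, J y⟫) (hsq : J ∘ₗ J = -LinearMap.id)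
    (v : E) : ⟪J v, J v⟫ = ⟪v, v⟫ := by
  rw [hskew, ← LinearMap.comp_apply, hsq]
  simp

lemma inner_e4 (v : V4) (k : Fin 4) : ⟪v, e4 k⟫ = v k := by
  simp [e4, EuclideanSpace.inner_single_right]

lemma real_inner_eq_sum (x y : V4) : ⟪x, y⟫ = ∑ k, x k * y k := by
  simp [EuclideanSpace.inner_eq_star_dotProduct, dotProduct, mul_comm]

lemma apply_eq_sum_e4 (f : V4 →ₗ[ℝ] ℝ) (v : V4) : f v = ∑ k, v k * f (e4 k) := by
  conv_lhs => rw [← (EuclideanSpace.basisFun (Fin 4) ℝ).sum_repr v]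
  simp [e4, map_sum]

lemma wedgeC_eq (β : V4 →ₗ[ℝ] ℝ) (X : V4) :
    wedgeC β X = fun k l => β (e4 k) * X l - β (e4 l) * X k := by
  ext k l
  simp only [wedgeC, inner_e4]

section om

variable {J : V4 →ₗ[ℝ] V4}

lemma om_antisymm (hskew : ∀ x y : V4, ⟪J x, y⟫ = -⟪x, J y⟫) (k l : Fin 4) :
    om J l k = -om J k l := by
  rw [om, om, hskew, real_inner_comm]

lemma apply_e4_apply (i k : Fin 4) : J (e4 i) k = om J i k := by
  rw [om, inner_e4]

lemma apply_apply_e4 (β : V4 →ₗ[ℝ] ℝ) (i : Fin 4) :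
    β (J (e4 i)) = (om J *ᵥ fun k => β (e4 k)) i := by
  rw [apply_eq_sum_e4 β]
  simp only [apply_e4_apply, mulVec, dotProduct]

lemma apply_eq_neg_mulVec (hskew : ∀ x y : V4, ⟪J x, y⟫ = -⟪x, J y⟫) (v : V4) (m : Fin 4) :
    J v m = -(om J *ᵥ v) m := by
  rw [← inner_e4, hskew, real_inner_comm, real_inner_eq_sum]
  simp [mulVec, dotProduct, apply_e4_apply]

lemma apply_apply_eq_neg_dotProduct (hskew : ∀ x y : V4, ⟪J x, y⟫ = -⟪x, J y⟫)
    (β : V4 →ₗ[ℝ] ℝ) (v : V4) : β (J v) = -(om J *ᵥ v ⬝ᵥ fun k => β (e4 k)) := by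
  rw [apply_eq_sum_e4 β]
  simp only [apply_eq_neg_mulVec hskew, dotProduct, neg_mul, Finset.sum_neg_distrib]

lemma sum_om_mul_om_eq_one (hskew : ∀ x y : V4, ⟪J x, y⟫ = -⟪x, J y⟫)
    (hsq : J ∘ₗ J = -LinearMap.id) (i : Fin 4) : ∑ k, om J i k * om J i k = 1 := by
  have h := inner_map_map_of_skew hskew hsq (e4 i)
  rw [inner_e4, real_inner_eq_sum] at h
  simp only [apply_e4_apply] at h
  simp [h, e4]

end om

theorem stmt3 (Jp : V4 →ₗ[ℝ] V4)
    (hskew : ∀ x y : V4, ⟪Jp x, y⟫ = -⟪x, Jp y⟫)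
    (hsq : Jp ∘ₗ Jp = -LinearMap.id)
    (hsd : SelfDual (om Jp))
    (β : V4 →ₗ[ℝ] ℝ) (X : V4) :
    ∀ i j : Fin 4,
      (1/2) * (wedgeC β X i j
          + (1/2) * ∑ k : Fin 4, ∑ l : Fin 4, wedgeC β X k l * eps4 k l i j)
        = (1/2) * wedgeC β X i j
          - (1/2) * ((-β (Jp (e4 i))) * ⟪Jp X, e4 j⟫ - (-β (Jp (e4 j))) * ⟪Jp X, e4 i⟫)
          - (1/2) * β (Jp X) * om Jp i j := by
  intro i j
  have hS := eq_selfDualForm_of_selfDual _ (om_antisymm hskew) hsd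
  have hnorm : om Jp 0 1 ^ 2 + om Jp 0 2 ^ 2 + om Jp 0 3 ^ 2 = 1 := by
    have h := sum_om_mul_om_eq_one hskew hsq 0
    rw [hS] at h
    simpa [Fin.sum_univ_four, selfDualForm, sq] using h
  have key := selfDualForm_wedge_eq_neg_hodgeStar (om Jp 0 1) (om Jp 0 2) (om Jp 0 3)
    (fun k => β (e4 k)) X i j
  rw [← hS, hnorm, ← wedgeC_eq, hodgeStar] at key
  rw [apply_apply_e4, apply_apply_e4, apply_apply_eq_neg_dotProduct hskew, inner_e4, inner_e4,
    apply_eq_neg_mulVec hskew, apply_eq_neg_mulVec hskew]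
  linear_combination (1/2 : ℝ) * key
end
end

section
/- On the open set U = {(x,y,s,t) ∈ ℝ⁴ : x > |y| > 0}, the 2-forms ω₊ = (dx∧(ds + y²dt) + dy∧(ds + x²dt))/(x+y)² and ω₋ = (dx∧(ds + y²dt) - dy∧(ds + x²dt))/(x-y)² are closed and non-degenerate, hence symplectic. -/
/-!
STATEMENT 11: On U = {(x,y,s,t) ∈ ℝ⁴ : x > |y| > 0}, the 2-forms
ω₊ = (dx∧(ds+y²dt) + dy∧(ds+x²dt))/(x+y)² and ω₋ = (dx∧(ds+y²dt) - dy∧(ds+x²dt))/(x-y)²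
are closed and non-degenerate (ω∧ω nowhere zero), hence symplectic.

2-forms are represented by antisymmetric component matrices (coordinates 0=x, 1=y,
2=s, 3=t); closedness is the cocycle condition on partial derivatives; ω∧ω is (up to the
factor 2·dx∧dy∧ds∧dt) the Pfaffian ω₀₁ω₂₃ - ω₀₂ω₁₃ + ω₀₃ω₁₂.
-/

noncomputable section

def pd (i : Fin 4) (f : (Fin 4 → ℝ) → ℝ) (p : Fin 4 → ℝ) : ℝ :=
  fderiv ℝ f p (Pi.single i 1)

def U4 : Set (Fin 4 → ℝ) := {p | |p 1| < p 0 ∧ 0 < |p 1|}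

/-- Components of ω₊. -/
def omegaP (p : Fin 4 → ℝ) : Matrix (Fin 4) (Fin 4) ℝ :=
  !![0, 0, 1/(p 0 + p 1)^2, (p 1)^2/(p 0 + p 1)^2;
     0, 0, 1/(p 0 + p 1)^2, (p 0)^2/(p 0 + p 1)^2;
     -(1/(p 0 + p 1)^2), -(1/(p 0 + p 1)^2), 0, 0;
     -((p 1)^2/(p 0 + p 1)^2), -((p 0)^2/(p 0 + p 1)^2), 0, 0]

/-- Components of ω₋. -/
def omegaM (p : Fin 4 → ℝ) : Matrix (Fin 4) (Fin 4) ℝ :=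
  !![0, 0, 1/(p 0 - p 1)^2, (p 1)^2/(p 0 - p 1)^2;
     0, 0, -(1/(p 0 - p 1)^2), -((p 0)^2/(p 0 - p 1)^2);
     -(1/(p 0 - p 1)^2), 1/(p 0 - p 1)^2, 0, 0;
     -((p 1)^2/(p 0 - p 1)^2), (p 0)^2/(p 0 - p 1)^2, 0, 0]


/-!
Both forms belong to the family ω_c = (dx∧(ds + y²dt) + c·dy∧(ds + x²dt))/(x + cy)², with
ω₊ = ω₁ and ω₋ = ω₋₁. For c² = 1 this form is exact wherever x + cy ≠ 0:
ω_c = d(u ds + v dt) with u = -1/(x + cy) and v = cxy/(x + cy), since du = (dx + c dy)/(x + cy)²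
and dv = (y²dx + c x²dy)/(x + cy)². Closedness is then d² = 0, i.e. the symmetry of second
derivatives of the C² potentials. The Pfaffian of ω_c is c(y² - x²)/(x + cy)⁴, which does not
vanish on U because |y| < x.
-/

open Filter Topology

section ExteriorDerivative

variable {E F : Type*} [NormedAddCommGroup E] [NormedSpace ℝ E]
  [NormedAddCommGroup F] [NormedSpace ℝ F]

theorem fderiv_fderiv_apply_comm {f : E → F} {p : E} (hf : ContDiffAt ℝ 2 f p) (v w : E) :
    fderiv ℝ (fun q => fderiv ℝ f q v) p w = fderiv ℝ (fun q => fderiv ℝ f q w) p v := by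
  have hdf : DifferentiableAt ℝ (fderiv ℝ f) p :=
    (hf.fderiv_right (m := 1) le_rfl).differentiableAt one_ne_zero
  rw [fderiv_clm_apply hdf (differentiableAt_const v),
    fderiv_clm_apply hdf (differentiableAt_const w)]
  simpa using (hf.isSymmSndFDerivAt (by simp)).eq w v

theorem cyclic_sum_fderiv_eq_zero_of_exact {ι : Type*} (e : ι → E) {θ : ι → E → F}
    {ω : ι → ι → E → F} {p : E} (hθ : ∀ k, ContDiffAt ℝ 2 (θ k) p)
    (hω : ∀ j k, ω j k =ᶠ[𝓝 p] fun q => fderiv ℝ (θ k) q (e j) - fderiv ℝ (θ j) q (e k))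
    (i j k : ι) :
    fderiv ℝ (ω j k) p (e i) + fderiv ℝ (ω k i) p (e j) + fderiv ℝ (ω i j) p (e k) = 0 := by
  have hD : ∀ a (v : E), DifferentiableAt ℝ (fun q => fderiv ℝ (θ a) q v) p := fun a v =>
    (((hθ a).fderiv_right (m := 1) le_rfl).differentiableAt one_ne_zero).clm_apply
      (differentiableAt_const v)
  have hexpand : ∀ a b c, fderiv ℝ (ω b c) p (e a) =
      fderiv ℝ (fun q => fderiv ℝ (θ c) q (e b)) p (e a)
        - fderiv ℝ (fun q => fderiv ℝ (θ b) q (e c)) p (e a) := by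
    intro a b c
    rw [(hω b c).fderiv_eq, fderiv_fun_sub (hD c (e b)) (hD b (e c))]
    rfl
  rw [hexpand i j k, hexpand j k i, hexpand k i j, fderiv_fderiv_apply_comm (hθ i) (e j),
    fderiv_fderiv_apply_comm (hθ j) (e k), fderiv_fderiv_apply_comm (hθ k) (e i)]
  abel

end ExteriorDerivative

def omegaC (c : ℝ) (p : Fin 4 → ℝ) : Matrix (Fin 4) (Fin 4) ℝ :=
  !![0, 0, 1/(p 0 + c * p 1)^2, (p 1)^2/(p 0 + c * p 1)^2;
     0, 0, c/(p 0 + c * p 1)^2, c * (p 0)^2/(p 0 + c * p 1)^2;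
     -(1/(p 0 + c * p 1)^2), -(c/(p 0 + c * p 1)^2), 0, 0;
     -((p 1)^2/(p 0 + c * p 1)^2), -(c * (p 0)^2/(p 0 + c * p 1)^2), 0, 0]

theorem omegaP_eq_omegaC : omegaP = omegaC 1 := by
  ext p j k
  fin_cases j <;> fin_cases k <;> simp [omegaP, omegaC]

theorem omegaM_eq_omegaC : omegaM = omegaC (-1) := by
  ext p j k
  fin_cases j <;> fin_cases k <;> simp [omegaM, omegaC, ← sub_eq_add_neg, neg_div]

def potentialC (c : ℝ) : Fin 4 → (Fin 4 → ℝ) → ℝ :=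
  ![0, 0, fun q => -(q 0 + c * q 1)⁻¹, fun q => c * q 0 * q 1 / (q 0 + c * q 1)]

section OmegaC

variable {c : ℝ} {q : Fin 4 → ℝ}

theorem contDiffAt_potentialC (hq : q 0 + c * q 1 ≠ 0) (k : Fin 4) :
    ContDiffAt ℝ 2 (potentialC c k) q := by
  fin_cases k <;> simp only [potentialC, Fin.reduceFinMk, Matrix.cons_val]
  · exact contDiffAt_const
  · exact contDiffAt_const
  · fun_prop (disch := assumption)
  · fun_prop (disch := assumption)

theorem hasFDerivAt_inv_add_mul (hq : q 0 + c * q 1 ≠ 0) :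
    HasFDerivAt (fun q : Fin 4 → ℝ => (q 0 + c * q 1)⁻¹)
      (-((q 0 + c * q 1) ^ 2)⁻¹ • (ContinuousLinearMap.proj (R := ℝ) (φ := fun _ : Fin 4 => ℝ) 0
        + c • ContinuousLinearMap.proj 1)) q :=
  (hasDerivAt_inv hq).comp_hasFDerivAt q
    ((hasFDerivAt_apply 0 q).fun_add ((hasFDerivAt_apply 1 q).const_mul c))

theorem fderiv_potentialC_two (hq : q 0 + c * q 1 ≠ 0) (w : Fin 4 → ℝ) :
    fderiv ℝ (potentialC c 2) q w = (w 0 + c * w 1) / (q 0 + c * q 1) ^ 2 := by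
  rw [show potentialC c 2 = fun q => -(q 0 + c * q 1)⁻¹ from rfl,
    (hasFDerivAt_inv_add_mul hq).fun_neg.fderiv]
  simp
  field_simp
  ring

theorem fderiv_potentialC_three (hc : c ^ 2 = 1) (hq : q 0 + c * q 1 ≠ 0) (w : Fin 4 → ℝ) :
    fderiv ℝ (potentialC c 3) q w =
      ((q 1) ^ 2 * w 0 + c * (q 0) ^ 2 * w 1) / (q 0 + c * q 1) ^ 2 := by
  have hnum : HasFDerivAt (fun q : Fin 4 → ℝ => c * q 0 * q 1) _ q :=
    ((hasFDerivAt_apply (𝕜 := ℝ) (0 : Fin 4) q).const_mul c).fun_mul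
      (hasFDerivAt_apply (𝕜 := ℝ) (1 : Fin 4) q)
  rw [show potentialC c 3 = fun q => c * q 0 * q 1 * (q 0 + c * q 1)⁻¹ from rfl,
    (hnum.fun_mul (hasFDerivAt_inv_add_mul hq)).fderiv]
  simp
  field_simp
  linear_combination (q 1) ^ 2 * w 0 * hc

theorem fderiv_potentialC (hc : c ^ 2 = 1) (hq : q 0 + c * q 1 ≠ 0) (k : Fin 4)
    (w : Fin 4 → ℝ) :
    fderiv ℝ (potentialC c k) q w = ![0, 0, (w 0 + c * w 1) / (q 0 + c * q 1) ^ 2,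
      ((q 1) ^ 2 * w 0 + c * (q 0) ^ 2 * w 1) / (q 0 + c * q 1) ^ 2] k := by
  fin_cases k
  · simp [potentialC]
  · simp [potentialC]
  · exact fderiv_potentialC_two hq w
  · exact fderiv_potentialC_three hc hq w

theorem omegaC_eventuallyEq_exact (hc : c ^ 2 = 1) (hq : q 0 + c * q 1 ≠ 0) (j k : Fin 4) :
    (fun p => omegaC c p j k) =ᶠ[𝓝 q] fun p =>
      fderiv ℝ (potentialC c k) p (Pi.single j 1) - fderiv ℝ (potentialC c j) p (Pi.single k 1) := by
  have hopen : IsOpen {p : Fin 4 → ℝ | p 0 + c * p 1 ≠ 0} :=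
    isOpen_ne_fun (by fun_prop) (by fun_prop)
  filter_upwards [hopen.mem_nhds hq] with p hp
  fin_cases j <;> fin_cases k <;> simp [omegaC, fderiv_potentialC hc hp]

theorem omegaC_closed (hc : c ^ 2 = 1) (hq : q 0 + c * q 1 ≠ 0) (i j k : Fin 4) :
    pd i (fun p => omegaC c p j k) q + pd j (fun p => omegaC c p k i) q
      + pd k (fun p => omegaC c p i j) q = 0 :=
  cyclic_sum_fderiv_eq_zero_of_exact (fun i => Pi.single i 1) (contDiffAt_potentialC hq)
    (omegaC_eventuallyEq_exact hc hq) i j k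

theorem omegaC_pfaffian :
    omegaC c q 0 1 * omegaC c q 2 3 - omegaC c q 0 2 * omegaC c q 1 3
      + omegaC c q 0 3 * omegaC c q 1 2 = c * ((q 1) ^ 2 - (q 0) ^ 2) / (q 0 + c * q 1) ^ 4 := by
  simp [omegaC]
  field_simp
  ring

theorem add_mul_pos_of_mem_U4 (hc : |c| = 1) (hq : q ∈ U4) : 0 < q 0 + c * q 1 := by
  have : |c * q 1| < q 0 := by rw [abs_mul, hc, one_mul]; exact hq.1
  linarith [neg_abs_le (c * q 1)]

theorem sq_lt_sq_of_mem_U4 (hq : q ∈ U4) : (q 1) ^ 2 < (q 0) ^ 2 :=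
  sq_lt_sq' (abs_lt.mp hq.1).1 (abs_lt.mp hq.1).2

theorem omegaC_pfaffian_ne_zero (hc : |c| = 1) (hq : q ∈ U4) :
    omegaC c q 0 1 * omegaC c q 2 3 - omegaC c q 0 2 * omegaC c q 1 3
      + omegaC c q 0 3 * omegaC c q 1 2 ≠ 0 := by
  have hc0 : c ≠ 0 := by rintro rfl; simp at hc
  have hpos := add_mul_pos_of_mem_U4 hc hq
  have hsq := sq_lt_sq_of_mem_U4 hq
  rw [omegaC_pfaffian]
  exact div_ne_zero (mul_ne_zero hc0 (by linarith)) (by positivity)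

end OmegaC

theorem stmt11 :
    (∀ p ∈ U4, ∀ i j k : Fin 4,
      pd i (fun q => omegaP q j k) p + pd j (fun q => omegaP q k i) p
        + pd k (fun q => omegaP q i j) p = 0) ∧
    (∀ p ∈ U4, ∀ i j k : Fin 4,
      pd i (fun q => omegaM q j k) p + pd j (fun q => omegaM q k i) p
        + pd k (fun q => omegaM q i j) p = 0) ∧
    (∀ p ∈ U4,
      omegaP p 0 1 * omegaP p 2 3 - omegaP p 0 2 * omegaP p 1 3
        + omegaP p 0 3 * omegaP p 1 2 ≠ 0) ∧
    (∀ p ∈ U4,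
      omegaM p 0 1 * omegaM p 2 3 - omegaM p 0 2 * omegaM p 1 3
        + omegaM p 0 3 * omegaM p 1 2 ≠ 0) := by
  have hP : |(1 : ℝ)| = 1 := abs_one
  have hM : |(-1 : ℝ)| = 1 := by simp
  rw [omegaP_eq_omegaC, omegaM_eq_omegaC]
  exact ⟨fun p hp => omegaC_closed (by norm_num) (add_mul_pos_of_mem_U4 hP hp).ne',
    fun p hp => omegaC_closed (by norm_num) (add_mul_pos_of_mem_U4 hM hp).ne',
    fun p hp => omegaC_pfaffian_ne_zero hP hp, fun p hp => omegaC_pfaffian_ne_zero hM hp⟩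

end
end

section
/- On the open set U = {(x,y,s,t) ∈ ℝ⁴ : x > |y| > 0}, with ω₊ and ω₋ the ambitoric Kähler forms ω₊ = (dx∧(ds+y²dt) + dy∧(ds+x²dt))/(x+y)² and ω₋ = (dx∧(ds+y²dt) - dy∧(ds+x²dt))/(x-y)², the vector fields K₁ = ∂/∂s and K₂ = ∂/∂t are Hamiltonian: K₁⌟ω₊ = d(1/(x+y)), K₁⌟ω₋ = d(1/(x-y)), K₂⌟ω₊ = -d(xy/(x+y)), and K₂⌟ω₋ = d(xy/(x-y)). -/
/-!
STATEMENT 12: On U = {(x,y,s,t) ∈ ℝ⁴ : x > |y| > 0}, with the ambitoric Kähler forms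
ω₊ = (dx∧(ds+y²dt) + dy∧(ds+x²dt))/(x+y)² and ω₋ = (dx∧(ds+y²dt) - dy∧(ds+x²dt))/(x-y)²,
the vector fields K₁ = ∂/∂s and K₂ = ∂/∂t are Hamiltonian:
K₁⌟ω₊ = d(1/(x+y)), K₁⌟ω₋ = d(1/(x-y)), K₂⌟ω₊ = -d(xy/(x+y)), K₂⌟ω₋ = d(xy/(x-y)).

2-forms are represented by antisymmetric component matrices (coordinates 0=x, 1=y, 2=s,
3=t); the interior product of the coordinate field ∂/∂s (resp. ∂/∂t) into ω has
components (K⌟ω)_j = ω_{2j} (resp. ω_{3j}), and d of a function has components `pd j`.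
-/

noncomputable section

/-! For any constant `c`, `d(1/(x+cy)) = -(dx + c dy)/(x+cy)²` and
`d(xy/(x+cy)) = (c y² dx + x² dy)/(x+cy)²`. With `c = ±1` these are, up to the sign `-c`
in the second case, the rows `K₁⌟ω±` and `K₂⌟ω±` of the ambitoric forms; on `U4` both
`x + y` and `x - y` are positive. -/

open ContinuousLinearMap

section

variable {ι : Type*} [Fintype ι] {i k : ι} {p : ι → ℝ}

theorem hasFDerivAt_one_div_add_mul (c : ℝ) (hp : p i + c * p k ≠ 0) :
    HasFDerivAt (fun q : ι → ℝ => 1 / (q i + c * q k))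
      ((-1 / (p i + c * p k) ^ 2) • proj i + (-c / (p i + c * p k) ^ 2) • proj k :
        (ι → ℝ) →L[ℝ] ℝ) p := by
  have h := (hasDerivAt_inv hp).comp_hasFDerivAt p
    (proj i + c • proj k : (ι → ℝ) →L[ℝ] ℝ).hasFDerivAt
  simp only [one_div]
  refine h.congr_fderiv ?_
  ext v
  simp
  field_simp

theorem hasFDerivAt_mul_div_add_mul (c : ℝ) (hp : p i + c * p k ≠ 0) :
    HasFDerivAt (fun q : ι → ℝ => q i * q k / (q i + c * q k))
      ((c * p k ^ 2 / (p i + c * p k) ^ 2) • proj i + (p i ^ 2 / (p i + c * p k) ^ 2) • proj k :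
        (ι → ℝ) →L[ℝ] ℝ) p := by
  have h := ((hasFDerivAt_apply i p).mul (hasFDerivAt_apply k p)).mul
    ((hasDerivAt_inv hp).comp_hasFDerivAt p
      (proj i + c • proj k : (ι → ℝ) →L[ℝ] ℝ).hasFDerivAt)
  simp only [div_eq_mul_inv]
  refine h.congr_fderiv ?_
  ext v
  simp
  field_simp
  ring

end

theorem pd_eq_of_hasFDerivAt {f : (Fin 4 → ℝ) → ℝ} {p : Fin 4 → ℝ} {a b : ℝ}
    (h : HasFDerivAt f (a • proj 0 + b • proj 1 : (Fin 4 → ℝ) →L[ℝ] ℝ) p) (j : Fin 4) :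
    pd j f p = ![a, b, 0, 0] j := by
  rw [pd, h.fderiv]
  fin_cases j <;> simp

theorem add_pos_of_mem_U4 {p : Fin 4 → ℝ} (hp : p ∈ U4) : 0 < p 0 + p 1 := by
  linarith [neg_abs_le (p 1), hp.1]

theorem sub_pos_of_mem_U4 {p : Fin 4 → ℝ} (hp : p ∈ U4) : 0 < p 0 - p 1 := by
  linarith [le_abs_self (p 1), hp.1]

theorem omegaP_two_eq_pd {p : Fin 4 → ℝ} (hp : p ∈ U4) (j : Fin 4) :
    omegaP p 2 j = pd j (fun q => 1 / (q 0 + q 1)) p := by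
  have h := hasFDerivAt_one_div_add_mul (p := p) (i := 0) (k := 1) 1
    (by simpa using (add_pos_of_mem_U4 hp).ne')
  simp only [one_mul] at h
  rw [pd_eq_of_hasFDerivAt h]
  fin_cases j <;> simp [omegaP, neg_div]

theorem omegaM_two_eq_pd {p : Fin 4 → ℝ} (hp : p ∈ U4) (j : Fin 4) :
    omegaM p 2 j = pd j (fun q => 1 / (q 0 - q 1)) p := by
  have h := hasFDerivAt_one_div_add_mul (p := p) (i := 0) (k := 1) (-1)
    (by simpa [← sub_eq_add_neg] using (sub_pos_of_mem_U4 hp).ne')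
  simp only [neg_one_mul, ← sub_eq_add_neg] at h
  rw [pd_eq_of_hasFDerivAt h]
  fin_cases j <;> simp [omegaM, neg_div]

theorem omegaP_three_eq_neg_pd {p : Fin 4 → ℝ} (hp : p ∈ U4) (j : Fin 4) :
    omegaP p 3 j = -pd j (fun q => q 0 * q 1 / (q 0 + q 1)) p := by
  have h := hasFDerivAt_mul_div_add_mul (p := p) (i := 0) (k := 1) 1
    (by simpa using (add_pos_of_mem_U4 hp).ne')
  simp only [one_mul] at h
  rw [pd_eq_of_hasFDerivAt h]
  fin_cases j <;> simp [omegaP]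

theorem omegaM_three_eq_pd {p : Fin 4 → ℝ} (hp : p ∈ U4) (j : Fin 4) :
    omegaM p 3 j = pd j (fun q => q 0 * q 1 / (q 0 - q 1)) p := by
  have h := hasFDerivAt_mul_div_add_mul (p := p) (i := 0) (k := 1) (-1)
    (by simpa [← sub_eq_add_neg] using (sub_pos_of_mem_U4 hp).ne')
  simp only [neg_one_mul, ← sub_eq_add_neg] at h
  rw [pd_eq_of_hasFDerivAt h]
  fin_cases j <;> simp [omegaM, neg_div]

theorem stmt12 :
    (∀ p ∈ U4, ∀ j : Fin 4,
      omegaP p 2 j = pd j (fun q => 1/(q 0 + q 1)) p) ∧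
    (∀ p ∈ U4, ∀ j : Fin 4,
      omegaM p 2 j = pd j (fun q => 1/(q 0 - q 1)) p) ∧
    (∀ p ∈ U4, ∀ j : Fin 4,
      omegaP p 3 j = -pd j (fun q => q 0 * q 1/(q 0 + q 1)) p) ∧
    (∀ p ∈ U4, ∀ j : Fin 4,
      omegaM p 3 j = pd j (fun q => q 0 * q 1/(q 0 - q 1)) p) :=
  ⟨fun _ hp => omegaP_two_eq_pd hp, fun _ hp => omegaM_two_eq_pd hp,
    fun _ hp => omegaP_three_eq_neg_pd hp, fun _ hp => omegaM_three_eq_pd hp⟩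

end
end

section
/- Let V be a real vector space with a linear involution τ (τ² = Id). Let f, φ be positive smooth functions on a manifold with f ≠ 1, f > 0, φ > 0, and suppose τ (applied pointwise to 1-forms) satisfies τ(df)/ (1 - f²) = dφ/φ. Define f₊ = f·φ/|1 - f²|^{1/2} and f₋ = φ/|1 - f²|^{1/2}. Then f₊/f₋ = f and τ(df₊) = df₋. -/
/-!
STATEMENT 13: M a smooth manifold (modelled here on a normed real vector space E, with
globally defined smooth functions), τ a bundle involution of T*M, f, φ smooth positive
functions with f ≠ 1 and df nowhere zero, satisfying τ(df) = ((1-f²)/φ)·dφ.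
With f₊ = f·φ/|1-f²|^{1/2} and f₋ = φ/|1-f²|^{1/2}, one has f₊/f₋ = f and τ(df₊) = df₋.
-/

/-- Derivative of `y ↦ (√|y|)⁻¹` at a nonzero point. -/
lemma hasDerivAt_inv_sqrt_abs {x : ℝ} (hx : x ≠ 0) :
    HasDerivAt (fun y => (Real.sqrt |y|)⁻¹) (-(1 / (2 * Real.sqrt |x| * x))) x := by
  rcases lt_or_gt_of_ne hx with hneg | hpos
  · -- x < 0 : near x, √|y| = √(-y)
    have hx' : -x > 0 := by linarith
    have hs : Real.sqrt (-x) ≠ 0 := ne_of_gt (Real.sqrt_pos.mpr hx')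
    have hneg' : HasDerivAt (fun y : ℝ => -y) (-1) x := (hasDerivAt_id x).neg
    have h1 : HasDerivAt (fun y : ℝ => Real.sqrt (-y)) (1 / (2 * Real.sqrt (-x)) * (-1)) x := by
      exact (Real.hasDerivAt_sqrt (ne_of_gt hx')).comp x hneg'
    have h2 : HasDerivAt (fun y : ℝ => (Real.sqrt (-y))⁻¹)
        (-(1 / (2 * Real.sqrt (-x)) * (-1)) / (Real.sqrt (-x)) ^ 2) x := h1.inv hs
    have heq : (fun y : ℝ => (Real.sqrt |y|)⁻¹) =ᶠ[nhds x] fun y => (Real.sqrt (-y))⁻¹ := by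
      filter_upwards [eventually_lt_nhds hneg] with y hy
      rw [abs_of_neg hy]
    have h3 := h2.congr_of_eventuallyEq heq
    refine h3.congr_deriv ?_
    rw [abs_of_neg hneg, Real.sq_sqrt hx'.le]
    field_simp
  · -- x > 0 : near x, √|y| = √y
    have hs : Real.sqrt x ≠ 0 := ne_of_gt (Real.sqrt_pos.mpr hpos)
    have h1 : HasDerivAt Real.sqrt (1 / (2 * Real.sqrt x)) x :=
      Real.hasDerivAt_sqrt (ne_of_gt hpos)
    have h2 : HasDerivAt (fun y : ℝ => (Real.sqrt y)⁻¹)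
        (-(1 / (2 * Real.sqrt x)) / (Real.sqrt x) ^ 2) x := h1.inv hs
    have heq : (fun y : ℝ => (Real.sqrt |y|)⁻¹) =ᶠ[nhds x] fun y => (Real.sqrt y)⁻¹ := by
      filter_upwards [eventually_gt_nhds hpos] with y hy
      rw [abs_of_pos hy]
    have h3 := h2.congr_of_eventuallyEq heq
    refine h3.congr_deriv ?_
    rw [abs_of_pos hpos, Real.sq_sqrt hpos.le]
    field_simp

theorem stmt13 {E : Type*} [NormedAddCommGroup E] [NormedSpace ℝ E]
    (f φ : E → ℝ) (hf : ContDiff ℝ (⊤ : ℕ∞) f) (hφ : ContDiff ℝ (⊤ : ℕ∞) φ)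
    (hf1 : ∀ p, f p ≠ 1) (hfpos : ∀ p, 0 < f p) (hφpos : ∀ p, 0 < φ p)
    (hdf : ∀ p, fderiv ℝ f p ≠ 0)
    (τ : E → (E →L[ℝ] ℝ) →ₗ[ℝ] (E →L[ℝ] ℝ))
    (hτ : ∀ p ξ, τ p (τ p ξ) = ξ)
    (hmain : ∀ p, τ p (fderiv ℝ f p) = ((1 - (f p)^2) / φ p) • fderiv ℝ φ p) :
    (∀ p, (f p * φ p / Real.sqrt |1 - (f p)^2|) / (φ p / Real.sqrt |1 - (f p)^2|) = f p) ∧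
    (∀ p, τ p (fderiv ℝ (fun q => f q * φ q / Real.sqrt |1 - (f q)^2|) p)
        = fderiv ℝ (fun q => φ q / Real.sqrt |1 - (f q)^2|) p) := by
  -- basic facts at each point
  have hu : ∀ p, 1 - (f p) ^ 2 ≠ 0 := by
    intro p h
    have h1 : (f p - 1) * (f p + 1) = 0 := by nlinarith [h]
    rcases mul_eq_zero.mp h1 with h2 | h2
    · exact hf1 p (by linarith)
    · have := hfpos p; linarith
  have hs : ∀ p, Real.sqrt |1 - (f p) ^ 2| ≠ 0 := fun p =>
    ne_of_gt (Real.sqrt_pos.mpr (abs_pos.mpr (hu p)))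
  constructor
  · intro p
    rw [div_div_div_eq, mul_comm (f p * φ p)]
    rw [mul_div_mul_left _ _ (hs p)]
    exact mul_div_cancel_right₀ _ (ne_of_gt (hφpos p))
  · intro p
    set F := fderiv ℝ f p with hF_def
    set P := fderiv ℝ φ p with hP_def
    set a := f p with ha_def
    set b := φ p with hb_def
    set u : ℝ := 1 - a ^ 2 with hu_def
    set s : ℝ := Real.sqrt |u| with hs_def
    have hup : u ≠ 0 := hu p
    have hsp : s ≠ 0 := hs p
    have hbp : b ≠ 0 := ne_of_gt (hφpos p)
    have hF : HasFDerivAt f F p :=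
      ((hf.differentiable (by simp)) p).hasFDerivAt
    have hP : HasFDerivAt φ P p :=
      ((hφ.differentiable (by simp)) p).hasFDerivAt
    -- derivative of the inner function 1 - f²
    have hU : HasFDerivAt (fun q => 1 - f q ^ 2) ((-(2 * a)) • F) p := by
      have h1 := (hasFDerivAt_const (1 : ℝ) p).sub (hF.mul hF)
      have h2 : (fun q => 1 - f q ^ 2) = fun q => 1 - f q * f q := by
        funext q; ring
      rw [h2]
      refine h1.congr_fderiv ?_
      ext v
      simp [ContinuousLinearMap.smul_apply]
      ring
    -- derivative of q ↦ (√|1 - f q²|)⁻¹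
    have hG : HasFDerivAt (fun q => (Real.sqrt |1 - f q ^ 2|)⁻¹)
        ((-(1 / (2 * s * u))) • ((-(2 * a)) • F)) p :=
      (hasDerivAt_inv_sqrt_abs hup).comp_hasFDerivAt (h₂ := fun y => (Real.sqrt |y|)⁻¹)
        (f := fun q => 1 - f q ^ 2) p hU
    -- derivative of f₋ = φ · (√|1-f²|)⁻¹
    have hFminus : HasFDerivAt (fun q => φ q / Real.sqrt |1 - f q ^ 2|)
        (b • ((-(1 / (2 * s * u))) • ((-(2 * a)) • F)) + s⁻¹ • P) p := by
      have h1 := hP.mul hG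
      have h2 : (fun q => φ q / Real.sqrt |1 - f q ^ 2|)
          = fun q => φ q * (Real.sqrt |1 - f q ^ 2|)⁻¹ := by
        funext q; rw [div_eq_mul_inv]
      rw [h2]
      exact h1
    -- derivative of f₊ = (f·φ) · (√|1-f²|)⁻¹
    have hFplus : HasFDerivAt (fun q => f q * φ q / Real.sqrt |1 - f q ^ 2|)
        ((a * b) • ((-(1 / (2 * s * u))) • ((-(2 * a)) • F))
          + s⁻¹ • (a • P + b • F)) p := by
      have h1 := (hF.mul hP).mul hG
      have h2 : (fun q => f q * φ q / Real.sqrt |1 - f q ^ 2|)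
          = fun q => (f q * φ q) * (Real.sqrt |1 - f q ^ 2|)⁻¹ := by
        funext q; rw [div_eq_mul_inv]
      rw [h2]
      exact h1
    -- the τ images of F and P
    have hτF : τ p F = (u / b) • P := hmain p
    have hτP : τ p P = (b / u) • F := by
      have h1 : F = τ p ((u / b) • P) := by rw [← hτF, hτ]
      have h2 : F = (u / b) • τ p P := by rw [h1, map_smul]
      have h3 : (b / u) • F = (b / u) • ((u / b) • τ p P) := by rw [← h2]
      have h4 : b / u * (u / b) = 1 := by field_simp
      rw [h3, smul_smul, h4, one_smul]
    rw [hFplus.fderiv, hFminus.fderiv]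
    rw [map_add, map_smul, map_smul, map_smul, map_smul, map_add, map_smul, map_smul,
      hτF, hτP]
    ext v
    simp only [ContinuousLinearMap.add_apply, ContinuousLinearMap.smul_apply, smul_eq_mul]
    field_simp
    ring
end

section
/- Let 0 ≤ λ ≤ μ and let u = (u₀,u₁,u₂,u₃,u₄) ∈ ℝ⁵ with u₀² + u₁² + u₂² + u₃² + u₄² = 1. Define nonnegative reals f₊, f₋ by f₊² + f₋² = ½(λ² + μ² - λ²(u₁² + u₂²) - μ²(u₃² + u₄²)) and f₊² - f₋² = λμ·u₀. Then f₊ = ½·√((λ + μu₀)² + (μ² - λ²)(u₁² + u₂²)) and f₋ = ½·√((λ - μu₀)² + (μ² - λ²)(u₁² + u₂²)). -/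
/-!
Adding and subtracting the two equations and eliminating `u₃² + u₄²` with `∑ uᵢ² = 1` gives
`(2 f₊)² = (λ + μ u₀)² + (μ² - λ²)(u₁² + u₂²)` and `(2 f₋)² = (λ - μ u₀)² + (μ² - λ²)(u₁² + u₂²)`;
since `f₊, f₋ ≥ 0` they are the halved square roots.
-/

open scoped BigOperators

lemma eq_sqrt_div_two_of_sq_eq {f x : ℝ} (hf : 0 ≤ f) (h : (2 * f) ^ 2 = x) : f = √x / 2 := by
  rw [← h, Real.sqrt_sq (by positivity)]
  ring

lemma sq_eq_of_add_sub_eq {lam mu u₀ s t p q : ℝ} (hu : u₀ ^ 2 + s + t = 1)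
    (hsum : p ^ 2 + q ^ 2 = (lam ^ 2 + mu ^ 2 - lam ^ 2 * s - mu ^ 2 * t) / 2)
    (hdiff : p ^ 2 - q ^ 2 = lam * mu * u₀) :
    (2 * p) ^ 2 = (lam + mu * u₀) ^ 2 + (mu ^ 2 - lam ^ 2) * s ∧
      (2 * q) ^ 2 = (lam - mu * u₀) ^ 2 + (mu ^ 2 - lam ^ 2) * s := by
  obtain rfl : t = 1 - u₀ ^ 2 - s := by linarith
  constructor
  · linear_combination 2 * hsum + 2 * hdiff
  · linear_combination 2 * hsum - 2 * hdiff

theorem stmt17_general (lam mu : ℝ)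
    (u : Fin 5 → ℝ) (hu : ∑ i : Fin 5, (u i)^2 = 1)
    (fp fm : ℝ) (hfp : 0 ≤ fp) (hfm : 0 ≤ fm)
    (h1 : fp^2 + fm^2
      = (lam^2 + mu^2 - lam^2*((u 1)^2 + (u 2)^2) - mu^2*((u 3)^2 + (u 4)^2)) / 2)
    (h2 : fp^2 - fm^2 = lam * mu * u 0) :
    fp = Real.sqrt ((lam + mu * u 0)^2 + (mu^2 - lam^2)*((u 1)^2 + (u 2)^2)) / 2 ∧
    fm = Real.sqrt ((lam - mu * u 0)^2 + (mu^2 - lam^2)*((u 1)^2 + (u 2)^2)) / 2 := by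
  have hu' : u 0 ^ 2 + (u 1 ^ 2 + u 2 ^ 2) + (u 3 ^ 2 + u 4 ^ 2) = 1 := by
    rw [Fin.sum_univ_five] at hu
    linarith
  obtain ⟨hp, hm⟩ := sq_eq_of_add_sub_eq hu' h1 h2
  exact ⟨eq_sqrt_div_two_of_sq_eq hfp hp, eq_sqrt_div_two_of_sq_eq hfm hm⟩

theorem stmt17 (lam mu : ℝ) (h0 : 0 ≤ lam) (hlm : lam ≤ mu)
    (u : Fin 5 → ℝ) (hu : ∑ i : Fin 5, (u i)^2 = 1)
    (fp fm : ℝ) (hfp : 0 ≤ fp) (hfm : 0 ≤ fm)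
    (h1 : fp^2 + fm^2
      = (lam^2 + mu^2 - lam^2*((u 1)^2 + (u 2)^2) - mu^2*((u 3)^2 + (u 4)^2)) / 2)
    (h2 : fp^2 - fm^2 = lam * mu * u 0) :
    fp = Real.sqrt ((lam + mu * u 0)^2 + (mu^2 - lam^2)*((u 1)^2 + (u 2)^2)) / 2 ∧
    fm = Real.sqrt ((lam - mu * u 0)^2 + (mu^2 - lam^2)*((u 1)^2 + (u 2)^2)) / 2 :=
  stmt17_general lam mu u hu fp fm hfp hfm h1 h2
end
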